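/- arXiv:1602.02525 — 6 statements merged into one kernel-verified Lean document; each statement's English description precedes it below -/
import Mathlib

section
/- Let U ⊂ ℂⁿ be a bounded domain, ε > 0, and (ψ_k) a sequence of holomorphic maps ψ_k : U → ℂⁿ such that each ψ_k is injective with holomorphic inverse on ψ_k(U), |det Dψ_k(z)| ≥ ε for all k and all z ∈ U, and ψ_k → ψ uniformly on U for some map ψ : U → ℂⁿ. Then ψ is injective and has a holomorphic inverse ψ⁻¹ : ψ(U) → U. -/
/-!
The derivatives `Dψ_k` converge locally uniformly to `Dψ` by the Cauchy estimates, so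
`|det Dψ| ≥ ε` and `ψ` is a local biholomorphism. Injectivity is a Hurwitz-type argument: near any
`z`, the `ψ_k` are uniformly close to the invertible linear map `Dψ(z)`, so they map a fixed small
ball onto a ball of fixed radius around `ψ_k(z) → ψ(z)`. If `ψ(a) = ψ(b)` with `a ≠ b`, some `ψ_k`
would then take the value `ψ(a)` both near `a` and near `b`.
-/

open Filter Topology Metric Set
open scoped NNReal

section ComplexFDeriv

variable {E F : Type*} [NormedAddCommGroup E] [NormedSpace ℂ E]
  [NormedAddCommGroup F] [NormedSpace ℂ F]

/-- Cauchy's estimate in several variables, obtained by restricting `f` to the complex lines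
through `z`. -/
theorem norm_fderiv_le_of_forall_mem_closedBall_norm_le {f : E → F} {z : E} {R C : ℝ}
    (hR : 0 < R) (hf : DifferentiableOn ℂ f (closedBall z R))
    (hC : ∀ x ∈ closedBall z R, ‖f x‖ ≤ C) :
    ‖fderiv ℂ f z‖ ≤ C / R := by
  have hC0 : 0 ≤ C := (norm_nonneg _).trans (hC z (mem_closedBall_self hR.le))
  refine ContinuousLinearMap.opNorm_le_bound' _ (by positivity) fun v hv => ?_
  have hv : 0 < ‖v‖ := (norm_nonneg v).lt_of_ne' hv
  have hline : MapsTo (fun w : ℂ => z + w • v) (closedBall 0 (R / ‖v‖)) (closedBall z R) := by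
    intro w hw
    rw [mem_closedBall_zero_iff, le_div_iff₀ hv] at hw
    simpa [dist_eq_norm, norm_smul] using hw
  have hg : DifferentiableOn ℂ (fun w : ℂ => f (z + w • v)) (closedBall 0 (R / ‖v‖)) :=
    hf.comp (by fun_prop) hline
  have hderiv : HasDerivAt (fun w : ℂ => f (z + w • v)) (fderiv ℂ f z v) 0 := by
    have hfz : HasFDerivAt f (fderiv ℂ f z) (z + (0 : ℂ) • v) := by
      simpa using (hf.differentiableAt (closedBall_mem_nhds z hR)).hasFDerivAt
    simpa [Function.comp_def] using
      hfz.comp_hasDerivAt (0 : ℂ) (((hasDerivAt_id 0).smul_const v).const_add z)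
  have hbound := Complex.norm_deriv_le_of_forall_mem_sphere_norm_le (div_pos hR hv)
    (hg.diffContOnCl_ball subset_rfl) fun w hw => hC _ (hline (sphere_subset_closedBall hw))
  rw [hderiv.deriv] at hbound
  calc ‖fderiv ℂ f z v‖ ≤ C / (R / ‖v‖) := hbound
    _ = C / R * ‖v‖ := by field_simp

theorem norm_fderiv_sub_le_of_forall_mem_closedBall_norm_sub_le {f g : E → F} {z : E}
    {R C : ℝ} (hR : 0 < R) (hf : DifferentiableOn ℂ f (closedBall z R))
    (hg : DifferentiableOn ℂ g (closedBall z R))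
    (hC : ∀ x ∈ closedBall z R, ‖f x - g x‖ ≤ C) :
    ‖fderiv ℂ f z - fderiv ℂ g z‖ ≤ C / R := by
  have hz := closedBall_mem_nhds z hR
  rw [← fderiv_sub (hf.differentiableAt hz) (hg.differentiableAt hz)]
  exact norm_fderiv_le_of_forall_mem_closedBall_norm_le hR (hf.sub hg) hC

/-- Near `z₀`, `f` differs from its affine approximation at `z₀` by `o(‖z - z₀‖)`; the Cauchy
estimate turns this into smallness of `fderiv f z - fderiv f z₀`. -/
theorem DifferentiableOn.continuousOn_fderiv_of_isOpen {f : E → F} {s : Set E}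
    (hf : DifferentiableOn ℂ f s) (hs : IsOpen s) : ContinuousOn (fderiv ℂ f) s := by
  intro z₀ hz₀
  refine (Metric.continuousAt_iff'.2 fun ε hε => ?_).continuousWithinAt
  set A := fderiv ℂ f z₀
  have hA : HasFDerivAt f A z₀ := (hf.differentiableAt (hs.mem_nhds hz₀)).hasFDerivAt
  obtain ⟨ρ, hρ, hρs⟩ := nhds_basis_closedBall.mem_iff.1
    ((hA.isLittleO.def (by positivity : 0 < ε / 4)).and (hs.mem_nhds hz₀))
  have hfρ : DifferentiableOn ℂ f (closedBall z₀ ρ) := hf.mono fun x hx => (hρs hx).2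
  have haff : ∀ x, HasFDerivAt (fun x => f z₀ + A x - A z₀) A x := fun x =>
    (A.hasFDerivAt.const_add (f z₀)).sub_const (A z₀)
  filter_upwards [ball_mem_nhds z₀ (half_pos hρ)] with z hz
  have hsub : closedBall z (ρ / 2) ⊆ closedBall z₀ ρ :=
    closedBall_subset_closedBall' (by linarith [mem_ball.1 hz])
  have hclose : ∀ x ∈ closedBall z (ρ / 2), ‖f x - (f z₀ + A x - A z₀)‖ ≤ ε / 4 * ρ := by
    intro x hx
    have hx := hsub hx
    calc ‖f x - (f z₀ + A x - A z₀)‖ = ‖f x - f z₀ - A (x - z₀)‖ := by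
          rw [map_sub]; congr 1; abel
      _ ≤ ε / 4 * ‖x - z₀‖ := (hρs hx).1
      _ ≤ ε / 4 * ρ := by gcongr; exact mem_closedBall_iff_norm.1 hx
  have hest := norm_fderiv_sub_le_of_forall_mem_closedBall_norm_sub_le (half_pos hρ)
    (hfρ.mono hsub) (fun x _ => (haff x).differentiableAt.differentiableWithinAt) hclose
  rw [(haff z).fderiv] at hest
  rw [dist_eq_norm]
  calc ‖fderiv ℂ f z - A‖ ≤ ε / 4 * ρ / (ρ / 2) := hest
    _ = ε / 2 := by field_simp; ring
    _ < ε := half_lt_self hε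

theorem DifferentiableOn.hasStrictFDerivAt_of_isOpen {f : E → F} {s : Set E}
    (hf : DifferentiableOn ℂ f s) (hs : IsOpen s) {z : E} (hz : z ∈ s) :
    HasStrictFDerivAt f (fderiv ℂ f z) z :=
  hasStrictFDerivAt_of_hasFDerivAt_of_continuousAt
    (eventually_of_mem (hs.mem_nhds hz) fun _ hy =>
      (hf.differentiableAt (hs.mem_nhds hy)).hasFDerivAt)
    ((hf.continuousOn_fderiv_of_isOpen hs).continuousAt (hs.mem_nhds hz))

section UniformLimit

variable {ι : Type*} {l : Filter ι} {f : ι → E → F} {g : E → F} {U : Set E}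

theorem UniformCauchySeqOn.fderiv_of_cthickening {s : Set E} {δ : ℝ} (hδ : 0 < δ)
    (hf : UniformCauchySeqOn f l (cthickening δ s))
    (hd : ∀ i, DifferentiableOn ℂ (f i) (cthickening δ s)) :
    UniformCauchySeqOn (fderiv ℂ ∘ f) l s := by
  intro u hu
  obtain ⟨ε, hε, hεu⟩ := mem_uniformity_dist.1 hu
  filter_upwards [hf _ (dist_mem_uniformity (by positivity : 0 < ε * δ / 2))] with i hi x hx
  have hball : closedBall x δ ⊆ cthickening δ s := closedBall_subset_cthickening hx δ
  refine hεu ?_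
  rw [dist_eq_norm]
  calc ‖fderiv ℂ (f i.1) x - fderiv ℂ (f i.2) x‖ ≤ ε * δ / 2 / δ :=
        norm_fderiv_sub_le_of_forall_mem_closedBall_norm_sub_le hδ ((hd _).mono hball)
          ((hd _).mono hball) fun y hy => by simpa [dist_eq_norm] using (hi y (hball hy)).le
    _ = ε / 2 := by field_simp
    _ < ε := half_lt_self hε

theorem TendstoLocallyUniformlyOn.uniformCauchySeqOn_fderiv [ProperSpace E]
    (hf : TendstoLocallyUniformlyOn f g l U) (hd : ∀ i, DifferentiableOn ℂ (f i) U)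
    (hU : IsOpen U) {K : Set E} (hK : IsCompact K) (hKU : K ⊆ U) :
    UniformCauchySeqOn (fderiv ℂ ∘ f) l K := by
  obtain ⟨δ, hδ, hδU⟩ := hK.exists_cthickening_subset_open hU hKU
  have hunif := (tendstoLocallyUniformlyOn_iff_forall_isCompact hU).1 hf _ hδU hK.cthickening
  exact hunif.uniformCauchySeqOn.fderiv_of_cthickening hδ fun i => (hd i).mono hδU

theorem TendstoLocallyUniformlyOn.exists_hasFDerivAt_of_differentiableOn [ProperSpace E]
    [CompleteSpace F] [l.NeBot] (hf : TendstoLocallyUniformlyOn f g l U)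
    (hd : ∀ i, DifferentiableOn ℂ (f i) U) (hU : IsOpen U) :
    ∃ g' : E → E →L[ℂ] F, TendstoLocallyUniformlyOn (fderiv ℂ ∘ f) g' l U ∧
      ∀ z ∈ U, HasFDerivAt g (g' z) z := by
  have hlim : ∀ z ∈ U, ∃ L, Tendsto (fun i => fderiv ℂ (f i) z) l (𝓝 L) := fun z hz =>
    cauchy_map_iff_exists_tendsto.1 <| (hf.uniformCauchySeqOn_fderiv hd hU isCompact_singleton
      (singleton_subset_iff.2 hz)).cauchy_map rfl
  choose! g' hg' using hlim
  have hconv : TendstoLocallyUniformlyOn (fderiv ℂ ∘ f) g' l U :=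
    (tendstoLocallyUniformlyOn_iff_forall_isCompact hU).2 fun K hKU hK =>
      (hf.uniformCauchySeqOn_fderiv hd hU hK hKU).tendstoUniformlyOn_of_tendsto fun z hz =>
        hg' z (hKU hz)
  exact ⟨g', hconv, fun z hz =>
    hasFDerivAt_of_tendsto_locally_uniformly_on' hU hconv hd (fun x hx => hf.tendsto_at hx) hz⟩

theorem TendstoLocallyUniformlyOn.differentiableOn_of_isOpen [ProperSpace E] [CompleteSpace F]
    [l.NeBot] (hf : TendstoLocallyUniformlyOn f g l U) (hd : ∀ i, DifferentiableOn ℂ (f i) U)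
    (hU : IsOpen U) : DifferentiableOn ℂ g U := by
  obtain ⟨g', -, hg'⟩ := hf.exists_hasFDerivAt_of_differentiableOn hd hU
  exact fun z hz => (hg' z hz).differentiableAt.differentiableWithinAt

theorem TendstoLocallyUniformlyOn.fderiv [ProperSpace E] [CompleteSpace F] [l.NeBot]
    (hf : TendstoLocallyUniformlyOn f g l U) (hd : ∀ i, DifferentiableOn ℂ (f i) U)
    (hU : IsOpen U) : TendstoLocallyUniformlyOn (fderiv ℂ ∘ f) (fderiv ℂ g) l U := by
  obtain ⟨g', hconv, hg'⟩ := hf.exists_hasFDerivAt_of_differentiableOn hd hU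
  exact hconv.congr_right fun z hz => (hg' z hz).fderiv.symm

end UniformLimit

end ComplexFDeriv

section LocallyOnto

variable {𝕜 E F ι : Type*} [RCLike 𝕜] [NormedAddCommGroup E] [NormedSpace 𝕜 E]
  [NormedAddCommGroup F] [NormedSpace 𝕜 F] {l : Filter ι} {f : ι → E → F}
  {f' : ι → E → E →L[𝕜] F} {p : E}

theorem exists_eventually_approximatesLinearOn_closedBall {A : E →L[𝕜] F}
    (hf : ∀ᶠ ix in l ×ˢ 𝓝 p, HasFDerivAt (f ix.1) (f' ix.1 ix.2) ix.2)
    (hf' : Tendsto (fun ix : ι × E => f' ix.1 ix.2) (l ×ˢ 𝓝 p) (𝓝 A)) {c : ℝ≥0} (hc : 0 < c) :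
    ∃ r > 0, ∀ᶠ i in l, ApproximatesLinearOn (f i) A (closedBall p r) c := by
  let : NormedSpace ℝ E := .restrictScalars ℝ 𝕜 E
  obtain ⟨⟨S, r⟩, ⟨hS, hr⟩, hSr⟩ := (l.basis_sets.prod nhds_basis_closedBall).eventually_iff.1
    (hf.and (hf'.eventually (closedBall_mem_nhds A hc)))
  refine ⟨r, hr, eventually_of_mem hS fun i hi x hx y hy => ?_⟩
  exact (convex_closedBall p r).norm_image_sub_le_of_norm_hasFDerivWithin_le'
    (fun w hw => (hSr (mk_mem_prod hi hw)).1.hasFDerivWithinAt)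
    (fun w hw => mem_closedBall_iff_norm.1 (hSr (mk_mem_prod hi hw)).2) hy hx

/-- Eventually the `f i` approximate `A` on a common ball, hence map it onto balls of a common
radius around `f i p`. -/
theorem eventually_mem_image_of_hasFDerivAt_of_tendsto [CompleteSpace E] {A : E ≃L[𝕜] F} {y : F}
    (hf : ∀ᶠ ix in l ×ˢ 𝓝 p, HasFDerivAt (f ix.1) (f' ix.1 ix.2) ix.2)
    (hf' : Tendsto (fun ix : ι × E => f' ix.1 ix.2) (l ×ˢ 𝓝 p) (𝓝 (A : E →L[𝕜] F)))
    (hy : Tendsto (fun i => f i p) l (𝓝 y)) {V : Set E} (hV : V ∈ 𝓝 p) :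
    ∀ᶠ i in l, y ∈ f i '' V := by
  rcases A.subsingleton_or_nnnorm_symm_pos with hE | hN
  · have := A.symm.toEquiv.subsingleton
    exact .of_forall fun i => ⟨p, mem_of_mem_nhds hV, Subsingleton.elim _ _⟩
  set N := ‖(A.symm : F →L[𝕜] E)‖₊
  obtain ⟨r, hr, hA⟩ := exists_eventually_approximatesLinearOn_closedBall hf hf'
    (half_pos (inv_pos.2 hN))
  obtain ⟨ρ, hρ, hρV⟩ := nhds_basis_closedBall.mem_iff.1 hV
  set s := min r ρ
  have hs : 0 < s := lt_min hr hρ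
  have hsr : closedBall p s ⊆ closedBall p r := closedBall_subset_closedBall (min_le_left r ρ)
  have hsV : closedBall p s ⊆ V := (closedBall_subset_closedBall (min_le_right r ρ)).trans hρV
  have hradius : (0 : ℝ) < ((N⁻¹ : ℝ) - (N⁻¹ / 2 : ℝ≥0)) * s := by
    have : (0 : ℝ) < (N : ℝ)⁻¹ := inv_pos.2 (by exact_mod_cast hN)
    push_cast
    exact mul_pos (by linarith) hs
  filter_upwards [hA, hy.eventually (closedBall_mem_nhds y hradius)] with i hi hyi
  exact image_mono hsV <| (hi.mono_set hsr).surjOn_closedBall_of_nonlinearRightInverse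
    A.toNonlinearRightInverse hs.le subset_rfl (mem_closedBall_comm.1 hyi)

end LocallyOnto

/-- Hurwitz-type argument: two distinct points with the same image under `g` would have
disjoint neighbourhoods whose images under some injective `f i` both contain that value. -/
theorem injOn_of_eventually_injOn_of_mem_image {X Y ι : Type*} [TopologicalSpace X] [T2Space X]
    {l : Filter ι} [l.NeBot] {f : ι → X → Y} {g : X → Y} {U : Set X}
    (hf : ∀ᶠ i in l, InjOn (f i) U)
    (hg : ∀ z ∈ U, ∀ V ∈ 𝓝 z, ∀ᶠ i in l, g z ∈ f i '' (V ∩ U)) : InjOn g U := by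
  intro a ha b hb hab
  by_contra hne
  obtain ⟨Va, Vb, hVa, hVb, haVa, hbVb, hdisj⟩ := t2_separation hne
  obtain ⟨i, hi, ⟨x, ⟨hxa, hxU⟩, hx⟩, ⟨y, ⟨hyb, hyU⟩, hy⟩⟩ :=
    (hf.and ((hg a ha Va (hVa.mem_nhds haVa)).and (hg b hb Vb (hVb.mem_nhds hbVb)))).exists
  exact hdisj.ne_of_mem hxa hyb (hi hxU hyU (hx.trans (hab.trans hy.symm)))

theorem TendstoLocallyUniformlyOn.tendsto_prod_nhds {α β ι : Type*} [TopologicalSpace α]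
    [UniformSpace β] {F : ι → α → β} {f : α → β} {l : Filter ι} {s : Set α} {x : α}
    (h : TendstoLocallyUniformlyOn F f l s) (hs : IsOpen s) (hx : x ∈ s) (hf : ContinuousAt f x) :
    Tendsto (fun y : ι × α => F y.1 y.2) (l ×ˢ 𝓝 x) (𝓝 (f x)) :=
  (hf.tendsto.comp tendsto_snd).congr_uniformity
    (hs.tendstoLocallyUniformlyOn_iff_forall_tendsto.1 h x hx)

theorem exists_continuousLinearEquiv_of_tendsto_of_le_norm_det {𝕜 E ι : Type*}
    [NontriviallyNormedField 𝕜] [CompleteSpace 𝕜] [NormedAddCommGroup E] [NormedSpace 𝕜 E]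
    [FiniteDimensional 𝕜 E] {l : Filter ι} [l.NeBot] {T : ι → E →L[𝕜] E} {L : E →L[𝕜] E} {ε : ℝ}
    (hε : 0 < ε) (hT : Tendsto T l (𝓝 L)) (hdet : ∀ i, ε ≤ ‖(T i).det‖) :
    ∃ A : E ≃L[𝕜] E, (A : E →L[𝕜] E) = L := by
  have hdet_lim : ε ≤ ‖L.det‖ :=
    ge_of_tendsto' (((continuous_norm.comp ContinuousLinearMap.continuous_det).tendsto L).comp hT)
      hdet
  exact ⟨_, L.coe_toContinuousLinearEquivOfDetNeZero (norm_pos_iff.1 (hε.trans_le hdet_lim))⟩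

theorem Set.InjOn.differentiableAt_invFunOn {𝕜 E F : Type*} [NontriviallyNormedField 𝕜]
    [NormedAddCommGroup E] [NormedSpace 𝕜 E] [CompleteSpace E] [NormedAddCommGroup F]
    [NormedSpace 𝕜 F] {f : E → F} {s : Set E} {a : E} {A : E ≃L[𝕜] F} (hinj : InjOn f s)
    (hs : s ∈ 𝓝 a) (hf : HasStrictFDerivAt f (A : E →L[𝕜] F) a) :
    DifferentiableAt 𝕜 (Function.invFunOn f s) (f a) :=
  (hf.to_local_left_inverse (eventually_of_mem hs fun _ hx =>
    hinj.leftInvOn_invFunOn hx)).differentiableAt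

theorem limit_of_biholomorphisms_is_biholomorphism_general
    (n : ℕ) (U : Set (Fin n → ℂ))
    (hUopen : IsOpen U)
    (ε : ℝ) (hε : 0 < ε)
    (ψseq : ℕ → (Fin n → ℂ) → (Fin n → ℂ)) (ψ : (Fin n → ℂ) → (Fin n → ℂ))
    (hhol : ∀ k, DifferentiableOn ℂ (ψseq k) U)
    (hinj : ∀ k, Set.InjOn (ψseq k) U)
    (hdet : ∀ k, ∀ z ∈ U, ε ≤ ‖(LinearMap.det
      ((fderiv ℂ (ψseq k) z : (Fin n → ℂ) →L[ℂ] (Fin n → ℂ)) :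
        (Fin n → ℂ) →ₗ[ℂ] (Fin n → ℂ)))‖)
    (hconv : TendstoUniformlyOn ψseq ψ atTop U) :
    Set.InjOn ψ U ∧ DifferentiableOn ℂ ψ U ∧
    ∃ φ : (Fin n → ℂ) → (Fin n → ℂ),
      DifferentiableOn ℂ φ (ψ '' U) ∧ ∀ z ∈ U, φ (ψ z) = z := by
  have hloc := hconv.tendstoLocallyUniformlyOn
  have hψ : DifferentiableOn ℂ ψ U := hloc.differentiableOn_of_isOpen hhol hUopen
  have hderiv := hloc.fderiv hhol hUopen
  have hinvertible : ∀ z ∈ U, ∃ A : (Fin n → ℂ) ≃L[ℂ] (Fin n → ℂ),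
      (A : (Fin n → ℂ) →L[ℂ] (Fin n → ℂ)) = fderiv ℂ ψ z := fun z hz =>
    exists_continuousLinearEquiv_of_tendsto_of_le_norm_det hε (hderiv.tendsto_at hz)
      fun k => hdet k z hz
  have hinjψ : InjOn ψ U := by
    refine injOn_of_eventually_injOn_of_mem_image (l := atTop) (.of_forall hinj) fun z hz V hV => ?_
    obtain ⟨A, hA⟩ := hinvertible z hz
    have hψseq : ∀ᶠ y in atTop ×ˢ 𝓝 z, HasFDerivAt (ψseq y.1) (fderiv ℂ (ψseq y.1) y.2) y.2 :=
      (Eventually.prod_inr (hUopen.mem_nhds hz) atTop).mono fun y hy =>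
        ((hhol y.1 y.2 hy).differentiableAt (hUopen.mem_nhds hy)).hasFDerivAt
    exact eventually_mem_image_of_hasFDerivAt_of_tendsto (f' := fun k => fderiv ℂ (ψseq k)) hψseq
      (hA ▸ hderiv.tendsto_prod_nhds hUopen hz
        ((hψ.continuousOn_fderiv_of_isOpen hUopen).continuousAt (hUopen.mem_nhds hz)))
      (hconv.tendsto_at hz) (inter_mem hV (hUopen.mem_nhds hz))
  refine ⟨hinjψ, hψ, Function.invFunOn ψ U, ?_, fun z hz => hinjψ.leftInvOn_invFunOn hz⟩
  rintro _ ⟨z, hz, rfl⟩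
  obtain ⟨A, hA⟩ := hinvertible z hz
  exact (hinjψ.differentiableAt_invFunOn (hUopen.mem_nhds hz)
    (hA ▸ hψ.hasStrictFDerivAt_of_isOpen hUopen hz)).differentiableWithinAt

/-- A uniform limit of injective holomorphic maps with holomorphic inverses
and Jacobian determinant bounded below on a bounded domain is injective with a
holomorphic inverse. -/
theorem limit_of_biholomorphisms_is_biholomorphism
    (n : ℕ) (U : Set (Fin n → ℂ))
    (hUopen : IsOpen U) (hUconn : IsConnected U) (hUbdd : Bornology.IsBounded U)
    (ε : ℝ) (hε : 0 < ε)
    (ψseq : ℕ → (Fin n → ℂ) → (Fin n → ℂ)) (ψ : (Fin n → ℂ) → (Fin n → ℂ))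
    (hhol : ∀ k, DifferentiableOn ℂ (ψseq k) U)
    (hinj : ∀ k, Set.InjOn (ψseq k) U)
    (hinvs : ∀ k, ∃ φ : (Fin n → ℂ) → (Fin n → ℂ),
      DifferentiableOn ℂ φ (ψseq k '' U) ∧ ∀ z ∈ U, φ (ψseq k z) = z)
    (hdet : ∀ k, ∀ z ∈ U, ε ≤ ‖(LinearMap.det
      ((fderiv ℂ (ψseq k) z : (Fin n → ℂ) →L[ℂ] (Fin n → ℂ)) :
        (Fin n → ℂ) →ₗ[ℂ] (Fin n → ℂ)))‖)
    (hconv : TendstoUniformlyOn ψseq ψ atTop U) :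
    Set.InjOn ψ U ∧ DifferentiableOn ℂ ψ U ∧
    ∃ φ : (Fin n → ℂ) → (Fin n → ℂ),
      DifferentiableOn ℂ φ (ψ '' U) ∧ ∀ z ∈ U, φ (ψ z) = z :=
  limit_of_biholomorphisms_is_biholomorphism_general n U hUopen ε hε ψseq ψ hhol hinj hdet hconv
end

section
/- Write ℝⁿ = ℝᵐ × ℝ^{n−m} and regard ℝᵐ = ℝᵐ × {0} ⊂ ℝⁿ. Let M₁, M₂ be germs at 0 of submanifolds of ℝᵐ. Then M₁ and M₂ are locally equivalent under germs of real-analytic diffeomorphisms of ℝⁿ fixing 0 if and only if they are locally equivalent under germs of real-analytic diffeomorphisms of ℝᵐ fixing 0. -/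
open Filter Topology

/-- Local equivalence at `0` of two subsets of `ℝᵏ` under real-analytic
diffeomorphism germs fixing `0`. -/
def LocAnalyticEquiv (k : ℕ) (M₁ M₂ : Set (Fin k → ℝ)) : Prop :=
  ∃ U : Set (Fin k → ℝ), IsOpen U ∧ 0 ∈ U ∧
    ∃ ψ : (Fin k → ℝ) → (Fin k → ℝ),
      AnalyticOnNhd ℝ ψ U ∧ ψ 0 = 0 ∧ Set.InjOn ψ U ∧
      (∀ x ∈ U, LinearMap.det ((fderiv ℝ ψ x : (Fin k → ℝ) →L[ℝ] (Fin k → ℝ)) :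
        (Fin k → ℝ) →ₗ[ℝ] (Fin k → ℝ)) ≠ 0) ∧
      ψ '' (M₁ ∩ U) = M₂ ∩ ψ '' U

/-- The inclusion `ℝᵐ ≅ ℝᵐ × {0} ⊂ ℝⁿ`. -/
def inclRm (m n : ℕ) (x : Fin m → ℝ) : Fin n → ℝ :=
  fun i => if h : (i : ℕ) < m then x ⟨i, h⟩ else 0

/-!
An analytic map germ fixing `0` with invertible derivative is a local diffeomorphism, so an
equivalence of germs is just such a `ψ` with `x ∈ M₁ ↔ ψ x ∈ M₂` near `0`.

An equivalence `φ` of `ℝᵐ` extends to `ℝⁿ = ℝᵐ × ℝⁿ⁻ᵐ` as `(x', x'') ↦ (φ x', x'')`.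
Conversely, given an equivalence `ψ` of `ℝⁿ`, `ψ ∘ ι` need not take values in `ℝᵐ`, so we compose
it with a linear left inverse `Q` of the inclusion `ι`. Among these left inverses (`π'` after a
shear `σ_A`) one can choose `Q` with `Q ∘ dψ(0) ∘ ι` invertible, as `dψ(0) ∘ ι` is injective.
Then `φ = Q ∘ ψ ∘ ι` is an equivalence: `ψ` maps `ι M₁` into `ι M₂`, on which `Q` inverts `ι`, and
conversely every point of `ι M₂` near `0` is `ψ` of a point near `0` because `ψ` is open at `0`;
injectivity of `φ` near `0` then pins that point down.
-/

open Function Set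

theorem image_inter_eq_inter_image_iff_of_injOn {α β : Type*} {f : α → β} {s u : Set α}
    {t : Set β} (hf : InjOn f u) :
    f '' (s ∩ u) = t ∩ f '' u ↔ ∀ x ∈ u, x ∈ s ↔ f x ∈ t := by
  constructor
  · intro h x hx
    refine ⟨fun hs => (h ▸ mem_image_of_mem f ⟨hs, hx⟩ : f x ∈ t ∩ f '' u).1, fun ht => ?_⟩
    obtain ⟨y, ⟨hys, hyu⟩, hyx⟩ : f x ∈ f '' (s ∩ u) := h ▸ ⟨ht, mem_image_of_mem f hx⟩
    exact hf hyu hx hyx ▸ hys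
  · intro h
    ext y
    constructor
    · rintro ⟨x, ⟨hs, hu⟩, rfl⟩
      exact ⟨(h x hu).1 hs, mem_image_of_mem f hu⟩
    · rintro ⟨ht, x, hu, rfl⟩
      exact ⟨x, ⟨(h x hu).2 ht, hu⟩, rfl⟩

namespace LinearMap

variable {K V W : Type*} [Field K] [AddCommGroup V] [Module K V] [FiniteDimensional K V]
  [AddCommGroup W] [Module K W]

theorem det_ne_zero_iff_bijective (f : V →ₗ[K] V) : LinearMap.det f ≠ 0 ↔ Bijective f := by
  rw [← Module.End.isUnit_iff, isUnit_iff_isUnit_det, isUnit_iff_ne_zero]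

theorem exists_bijective_add_comp (B : V →ₗ[K] V) (C : V →ₗ[K] W)
    (h : Disjoint (ker B) (ker C)) : ∃ A : W →ₗ[K] V, Bijective (B + A ∘ₗ C) := by
  have hC : ker (C ∘ₗ (ker B).subtype) = ⊥ := by
    rw [ker_comp, ← Submodule.disjoint_iff_comap_eq_bot]
    exact h
  obtain ⟨D, hD⟩ := (C ∘ₗ (ker B).subtype).exists_leftInverse_of_injective hC
  obtain ⟨Z, hZ⟩ := (range B).exists_isCompl
  have hdim : Module.finrank K (ker B) = Module.finrank K Z := by
    have := Submodule.finrank_add_eq_of_isCompl hZ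
    have := B.finrank_range_add_finrank_ker
    omega
  let e := LinearEquiv.ofFinrankEq _ _ hdim
  -- `A` carries `C (ker B)` isomorphically onto a complement of `range B`.
  refine ⟨Z.subtype ∘ₗ e ∘ₗ D, ?_⟩
  have hinj : Injective (B + (Z.subtype ∘ₗ e ∘ₗ D) ∘ₗ C) := by
    rw [← ker_eq_bot, ker_eq_bot']
    intro x hx
    have hBx : B x = 0 := by
      refine Submodule.disjoint_def.1 hZ.disjoint _ (mem_range_self B x) ?_
      rw [eq_neg_of_add_eq_zero_left hx]
      exact Z.neg_mem (e (D (C x))).2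
    have hDx : D (C x) = ⟨x, hBx⟩ := congr($hD ⟨x, hBx⟩)
    have he : e ⟨x, hBx⟩ = 0 := by
      ext
      simpa [hBx, hDx] using hx
    simpa using congr_arg Subtype.val (e.map_eq_zero_iff.1 he)
  exact ⟨hinj, injective_iff_surjective.1 hinj⟩

theorem exists_leftInverse_comp_bijective (ι T : V →ₗ[K] W) (hι : Injective ι)
    (hT : Injective T) : ∃ Q : W →ₗ[K] V, Q ∘ₗ ι = id ∧ Bijective (Q ∘ₗ T) := by
  obtain ⟨π, hπ⟩ := ι.exists_leftInverse_of_injective (ker_eq_bot.2 hι)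
  set R := id - ι ∘ₗ π
  have hRι : R ∘ₗ ι = 0 := by
    rw [sub_comp, comp_assoc, hπ, id_comp, comp_id, sub_self]
  have hdisj : Disjoint (ker (π ∘ₗ T)) (ker (R ∘ₗ T)) := by
    refine Submodule.disjoint_def.2 fun x hπx hRx => hT ?_
    rw [mem_ker, comp_apply] at hπx hRx
    calc T x = ι (π (T x)) + R (T x) := by simp [R]
      _ = T 0 := by rw [hπx, hRx, map_zero, map_zero, add_zero]
  obtain ⟨A, hA⟩ := exists_bijective_add_comp _ _ hdisj
  refine ⟨π + A ∘ₗ R, ?_, ?_⟩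
  · rw [add_comp, hπ, comp_assoc, hRι, comp_zero, add_zero]
  · rwa [add_comp, comp_assoc]

end LinearMap

theorem eventually_mem_iff_comp_of_leftInverse {X Y : Type*} [TopologicalSpace X]
    [TopologicalSpace Y] {ι : X → Y} {Q : Y → X} {ψ : Y → Y} {a : X} {b : Y} {M₁ M₂ : Set X}
    (hQι : LeftInverse Q ι) (hι : Tendsto ι (𝓝 a) (𝓝 b)) (hQ : Tendsto Q (𝓝 b) (𝓝 a))
    (hψ : map ψ (𝓝 b) = 𝓝 b) (hinj : ∃ s ∈ 𝓝 a, InjOn (Q ∘ ψ ∘ ι) s)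
    (hM : ∀ᶠ z in 𝓝 b, z ∈ ι '' M₁ ↔ ψ z ∈ ι '' M₂) :
    ∀ᶠ x in 𝓝 a, x ∈ M₁ ↔ Q (ψ (ι x)) ∈ M₂ := by
  obtain ⟨s, hs, hs_inj⟩ := hinj
  set t := {z | (z ∈ ι '' M₁ ↔ ψ z ∈ ι '' M₂) ∧ Q z ∈ s}
  have ht : t ∈ 𝓝 b := hM.and (hQ.eventually hs)
  have hψt : ψ '' t ∈ 𝓝 b := hψ ▸ image_mem_map ht
  have hψc : Tendsto ψ (𝓝 b) (𝓝 b) := hψ.le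
  have hφ : Tendsto (ι ∘ Q ∘ ψ ∘ ι) (𝓝 a) (𝓝 b) := hι.comp (hQ.comp (hψc.comp hι))
  filter_upwards [hs, hι ht, hφ hψt] with x hxs hxt ⟨z, hzt, hz⟩
  constructor
  · intro hx
    obtain ⟨y, hy, hyψ⟩ := hxt.1.1 (mem_image_of_mem ι hx)
    rwa [← hyψ, hQι]
  · intro hx
    obtain ⟨w, hw, rfl⟩ := hzt.1.2 (hz ▸ mem_image_of_mem ι hx)
    have hws : w ∈ s := by simpa only [hQι w] using hzt.2
    have hwx : Q (ψ (ι w)) = Q (ψ (ι x)) := by simp only [comp_apply] at hz; rw [hz, hQι]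
    rwa [← hs_inj hws hxs hwx]

section Germs

variable {E F : Type*} [NormedAddCommGroup E] [NormedSpace ℝ E] [NormedAddCommGroup F]
  [NormedSpace ℝ F]

theorem AnalyticAt.exists_mem_nhds_injOn [CompleteSpace E] [CompleteSpace F] {f : E → F} {a : E}
    (hf : AnalyticAt ℝ f a) (hf' : Bijective (fderiv ℝ f a)) : ∃ s ∈ 𝓝 a, InjOn f s := by
  have hs : HasStrictFDerivAt f (ContinuousLinearEquiv.ofBijective (fderiv ℝ f a)
      (LinearMap.ker_eq_bot.2 hf'.1) (LinearMap.range_eq_top.2 hf'.2) : E →L[ℝ] F) a := by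
    rw [ContinuousLinearEquiv.coe_ofBijective]
    exact hf.hasStrictFDerivAt
  exact ⟨_, hs.eventually_left_inverse, fun x hx y hy hxy => hx.symm.trans (hxy ▸ hy)⟩

theorem AnalyticAt.eventually_det_fderiv_ne_zero [FiniteDimensional ℝ E] {f : E → E} {a : E}
    (hf : AnalyticAt ℝ f a) (ha : LinearMap.det (fderiv ℝ f a : E →ₗ[ℝ] E) ≠ 0) :
    ∀ᶠ x in 𝓝 a, LinearMap.det (fderiv ℝ f x : E →ₗ[ℝ] E) ≠ 0 :=
  (ContinuousLinearMap.continuous_det.continuousAt.comp hf.fderiv.continuousAt).eventually_ne ha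

def AnalyticGermEquiv (M₁ M₂ : Set E) : Prop :=
  ∃ ψ : E → E, AnalyticAt ℝ ψ 0 ∧ ψ 0 = 0 ∧ Bijective (fderiv ℝ ψ 0) ∧
    ∀ᶠ x in 𝓝 0, x ∈ M₁ ↔ ψ x ∈ M₂

variable (ι : E →L[ℝ] F) (π : F →L[ℝ] E)

/-- With `F = E × G` and `ι`, `π` the inclusion and projection, this is `(x, y) ↦ (φ x, y)`. -/
def extendAlong (φ : E → E) (z : F) : F :=
  z + ι (φ (π z) - π z)

def extendAlongL (φ' : E →L[ℝ] E) : F →L[ℝ] F :=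
  ContinuousLinearMap.id ℝ F + ι ∘L (φ' ∘L π - π)

theorem coe_extendAlongL (φ' : E →L[ℝ] E) : ⇑(extendAlongL ι π φ') = extendAlong ι π φ' := rfl

variable {ι π}

theorem AnalyticAt.extendAlong {φ : E → E} {z : F} (hφ : AnalyticAt ℝ φ (π z)) :
    AnalyticAt ℝ (extendAlong ι π φ) z :=
  analyticAt_id.add (ι.analyticAt _ |>.comp ((hφ.comp (π.analyticAt z)).sub (π.analyticAt z)))

theorem HasFDerivAt.extendAlong {φ : E → E} {φ' : E →L[ℝ] E} {z : F}
    (hφ : HasFDerivAt φ φ' (π z)) :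
    HasFDerivAt (extendAlong ι π φ) (extendAlongL ι π φ') z :=
  (hasFDerivAt_id z).add (ι.hasFDerivAt.comp z ((hφ.comp z π.hasFDerivAt).sub π.hasFDerivAt))

theorem map_extendAlong (h : LeftInverse π ι) (φ : E → E) (z : F) :
    π (extendAlong ι π φ z) = φ (π z) := by
  simp [extendAlong, h _]

theorem extendAlong_sub (h : LeftInverse π ι) (φ : E → E) (z : F) :
    extendAlong ι π φ z - ι (π (extendAlong ι π φ z)) = z - ι (π z) := by
  rw [map_extendAlong h, extendAlong, map_sub]
  abel

theorem leftInverse_extendAlong (h : LeftInverse π ι) {f g : E → E} (hgf : LeftInverse g f) :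
    LeftInverse (extendAlong ι π g) (extendAlong ι π f) := fun z => by
  rw [extendAlong, map_extendAlong h, hgf, extendAlong, map_sub, map_sub]
  abel

theorem bijective_extendAlong (h : LeftInverse π ι) {f : E → E} (hf : Bijective f) :
    Bijective (extendAlong ι π f) := by
  obtain ⟨g, hgf, hfg⟩ := bijective_iff_has_inverse.1 hf
  exact bijective_iff_has_inverse.2
    ⟨_, leftInverse_extendAlong h hgf, leftInverse_extendAlong h hfg⟩

theorem mem_image_iff_of_leftInverse (h : LeftInverse π ι) {M : Set E} {z : F} :
    z ∈ ι '' M ↔ π z ∈ M ∧ z - ι (π z) = 0 := by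
  constructor
  · rintro ⟨x, hx, rfl⟩
    simp [h x, hx]
  · rintro ⟨hz, hz0⟩
    exact ⟨π z, hz, (sub_eq_zero.1 hz0).symm⟩

theorem AnalyticGermEquiv.image_of_leftInverse (h : LeftInverse π ι) {M₁ M₂ : Set E}
    (hM : AnalyticGermEquiv M₁ M₂) : AnalyticGermEquiv (ι '' M₁) (ι '' M₂) := by
  obtain ⟨φ, hφa, hφ0, hφd, hφM⟩ := hM
  rw [← map_zero π] at hφa hφd hφM
  refine ⟨extendAlong ι π φ, hφa.extendAlong, by simp [extendAlong, hφ0], ?_, ?_⟩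
  · rw [hφa.differentiableAt.hasFDerivAt.extendAlong.fderiv, coe_extendAlongL]
    exact bijective_extendAlong h hφd
  · filter_upwards [π.continuous.continuousAt.eventually hφM] with z hz
    rw [mem_image_iff_of_leftInverse h, mem_image_iff_of_leftInverse h, extendAlong_sub h,
      map_extendAlong h]
    exact and_congr_left' hz

theorem AnalyticGermEquiv.of_image [FiniteDimensional ℝ F] (hι : Injective ι) {M₁ M₂ : Set E}
    (hM : AnalyticGermEquiv (ι '' M₁) (ι '' M₂)) : AnalyticGermEquiv M₁ M₂ := by
  have : FiniteDimensional ℝ E := Module.Finite.of_injective (ι : E →ₗ[ℝ] F) hι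
  obtain ⟨ψ, hψa, hψ0, hψd, hψM⟩ := hM
  obtain ⟨Q, hQι, hQψ⟩ := (ι : E →ₗ[ℝ] F).exists_leftInverse_comp_bijective
    ((fderiv ℝ ψ 0 : F →ₗ[ℝ] F) ∘ₗ ι) hι (hψd.1.comp hι)
  let Qc := LinearMap.toContinuousLinearMap Q
  have hQcι : LeftInverse Qc ι := LinearMap.congr_fun hQι
  have hψa' : AnalyticAt ℝ ψ (ι 0) := by rwa [map_zero]
  have hφa : AnalyticAt ℝ (Qc ∘ ψ ∘ ι) 0 := Qc.analyticAt _ |>.comp (hψa'.comp (ι.analyticAt 0))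
  have hφd : Bijective (fderiv ℝ (Qc ∘ ψ ∘ ι) 0) := by
    rw [(Qc.hasFDerivAt.comp 0 (hψa'.differentiableAt.hasFDerivAt.comp 0 ι.hasFDerivAt)).fderiv,
      map_zero]
    exact hQψ
  refine ⟨Qc ∘ ψ ∘ ι, hφa, by simp [hψ0], hφd, ?_⟩
  refine eventually_mem_iff_comp_of_leftInverse hQcι (ι.continuous.tendsto' 0 0 (map_zero ι))
    (Qc.continuous.tendsto' 0 0 (map_zero Qc)) ?_ (hφa.exists_mem_nhds_injOn hφd) hψM
  rw [hψa.hasStrictFDerivAt.map_nhds_eq_of_surj (LinearMap.range_eq_top.2 hψd.2), hψ0]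

theorem analyticGermEquiv_image_iff [FiniteDimensional ℝ F] (hι : Injective ι) {M₁ M₂ : Set E} :
    AnalyticGermEquiv (ι '' M₁) (ι '' M₂) ↔ AnalyticGermEquiv M₁ M₂ := by
  refine ⟨AnalyticGermEquiv.of_image hι, fun hM => ?_⟩
  obtain ⟨π, hπ⟩ := (ι : E →ₗ[ℝ] F).exists_leftInverse_of_injective (LinearMap.ker_eq_bot.2 hι)
  exact hM.image_of_leftInverse (π := LinearMap.toContinuousLinearMap π) (LinearMap.congr_fun hπ)

end Germs

theorem locAnalyticEquiv_iff_analyticGermEquiv {k : ℕ} {M₁ M₂ : Set (Fin k → ℝ)} :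
    LocAnalyticEquiv k M₁ M₂ ↔ AnalyticGermEquiv M₁ M₂ := by
  constructor
  · rintro ⟨U, hUo, hU0, ψ, hψa, hψ0, hψi, hψd, hψM⟩
    refine ⟨ψ, hψa 0 hU0, hψ0, (LinearMap.det_ne_zero_iff_bijective _).1 (hψd 0 hU0), ?_⟩
    filter_upwards [hUo.mem_nhds hU0] with x hx
    exact (image_inter_eq_inter_image_iff_of_injOn hψi).1 hψM x hx
  · rintro ⟨ψ, hψa, hψ0, hψd, hψM⟩
    obtain ⟨s, hs, hψi⟩ := hψa.exists_mem_nhds_injOn hψd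
    have hdet := hψa.eventually_det_fderiv_ne_zero
      ((LinearMap.det_ne_zero_iff_bijective _).2 hψd)
    obtain ⟨U, hUt, hUo, hU0⟩ := mem_nhds_iff.1
      (inter_mem (hψa.eventually_analyticAt.and (hdet.and hψM)) hs)
    refine ⟨U, hUo, hU0, ψ, fun x hx => (hUt hx).1.1, hψ0, hψi.mono fun x hx => (hUt hx).2,
      fun x hx => (hUt hx).1.2.1, ?_⟩
    exact (image_inter_eq_inter_image_iff_of_injOn (hψi.mono fun x hx => (hUt hx).2)).2
      fun x hx => (hUt hx).1.2.2

def inclRmCLM (m n : ℕ) : (Fin m → ℝ) →L[ℝ] (Fin n → ℝ) :=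
  ContinuousLinearMap.pi fun i =>
    if h : (i : ℕ) < m then ContinuousLinearMap.proj ⟨i, h⟩ else 0

theorem coe_inclRmCLM (m n : ℕ) : ⇑(inclRmCLM m n) = inclRm m n := by
  funext x i
  simp only [inclRmCLM, inclRm, ContinuousLinearMap.pi_apply]
  split <;> simp

theorem inclRm_injective {m n : ℕ} (hmn : m ≤ n) : Injective (inclRm m n) :=
  fun x y hxy => funext fun i => by simpa [inclRm] using congr_fun hxy (Fin.castLE hmn i)

theorem locEquiv_ambient_iff_subspace_general
    (m n : ℕ) (hmn : m ≤ n)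
    (M₁ M₂ : Set (Fin m → ℝ)) :
    LocAnalyticEquiv n (inclRm m n '' M₁) (inclRm m n '' M₂) ↔
      LocAnalyticEquiv m M₁ M₂ := by
  rw [locAnalyticEquiv_iff_analyticGermEquiv, locAnalyticEquiv_iff_analyticGermEquiv,
    ← coe_inclRmCLM]
  exact analyticGermEquiv_image_iff (by rw [coe_inclRmCLM]; exact inclRm_injective hmn)

/-- Germs at 0 of submanifolds of `ℝᵐ ⊂ ℝⁿ` are locally equivalent under
real-analytic diffeomorphism germs of `ℝⁿ` fixing 0 iff they are equivalent under
real-analytic diffeomorphism germs of `ℝᵐ` fixing 0. -/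
theorem locEquiv_ambient_iff_subspace
    (m n : ℕ) (hmn : m ≤ n)
    (M₁ M₂ : Set (Fin m → ℝ)) (h01 : 0 ∈ M₁) (h02 : 0 ∈ M₂) :
    LocAnalyticEquiv n (inclRm m n '' M₁) (inclRm m n '' M₂) ↔
      LocAnalyticEquiv m M₁ M₂ :=
  locEquiv_ambient_iff_subspace_general m n hmn M₁ M₂
end

section
/- Let f : (−r, r) → ℝ be continuous with f(0) = 0, and suppose f(x + j·f(x)) = f(x) for all integers j and all x ∈ (−r, r) for which the argument x + j·f(x) lies in (−r, r). Then f ≡ 0 on a neighborhood of 0. -/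
open Filter Topology

/-- If `f` is continuous on `(−r,r)` with `f(0)=0` and
`f(x + j·f(x)) = f(x)` whenever `x + j·f(x)` stays in `(−r,r)` (for all `j ∈ ℤ`),
then `f ≡ 0` on a neighborhood of 0. -/
theorem unipotent_invariance_forces_zero
    (r : ℝ) (hr : 0 < r)
    (f : ℝ → ℝ) (hfc : ContinuousOn f (Set.Ioo (-r) r)) (hf0 : f 0 = 0)
    (hfe : ∀ x ∈ Set.Ioo (-r) r, ∀ j : ℤ,
      x + (j : ℝ) * f x ∈ Set.Ioo (-r) r → f (x + (j : ℝ) * f x) = f x) :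
    ∀ᶠ x in 𝓝 (0 : ℝ), f x = 0 := by
  by_contra h
  rw [Filter.not_eventually] at h
  have hopen : Set.Ioo (-r) r ∈ 𝓝 (0:ℝ) := Ioo_mem_nhds (by linarith) hr
  have hc0 : ContinuousAt f 0 := hfc.continuousAt hopen
  have key : ∀ x₀ ∈ Set.Ioo (-(r/2)) (r/2), f x₀ = 0 := by
    intro x₀ hx₀
    obtain ⟨hx₀1, hx₀2⟩ := hx₀
    have hx₀' : x₀ ∈ Set.Ioo (-r) r := ⟨by linarith, by linarith⟩
    have hcx : ContinuousAt f x₀ :=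
      hfc.continuousAt (Ioo_mem_nhds (by linarith) (by linarith))
    by_contra hne
    have hpos : 0 < |f x₀| := abs_pos.mpr hne
    set ε := |f x₀| / 2 with hεdef
    have hε : 0 < ε := by positivity
    obtain ⟨δ, hδ, hδc⟩ := Metric.continuousAt_iff.mp hcx ε hε
    set η := min ε (min δ (r/2)) with hηdef
    have hη : 0 < η := lt_min hε (lt_min hδ (by linarith))
    have hsmall : ∀ᶠ x in 𝓝 (0:ℝ), |f x| < η := by
      have h1 := hc0
      rw [ContinuousAt, hf0] at h1
      filter_upwards [h1 (Metric.ball_mem_nhds 0 hη)] with x hx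
      simpa [Real.dist_eq] using hx
    obtain ⟨x', ⟨hx'ne, hx'small⟩, hx'mem⟩ :=
      ((h.and_eventually hsmall).and_eventually hopen).exists
    set c := f x' with hcdef
    have hcne : c ≠ 0 := hx'ne
    set t := (x₀ - x') / c with htdef
    set j : ℤ := ⌊t⌋ with hjdef
    set y := x' + (j:ℝ) * c with hydef
    have htc : t * c = x₀ - x' := div_mul_cancel₀ _ hcne
    have hfl1 : (j:ℝ) ≤ t := Int.floor_le t
    have hfl2 : t < (j:ℝ) + 1 := Int.lt_floor_add_one t
    have hdiff : y - x₀ = ((j:ℝ) - t) * c := by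
      rw [hydef, sub_mul, htc]; ring
    have habs : |y - x₀| ≤ |c| := by
      rw [hdiff, abs_mul]
      have h1 : |(j:ℝ) - t| ≤ 1 := abs_le.mpr ⟨by linarith, by linarith⟩
      calc |(j:ℝ) - t| * |c| ≤ 1 * |c| := mul_le_mul_of_nonneg_right h1 (abs_nonneg c)
        _ = |c| := one_mul _
    have hcη : |c| < η := hx'small
    have hcr : |c| < r/2 := lt_of_lt_of_le hcη (le_trans (min_le_right _ _) (min_le_right _ _))
    have hcδ : |c| < δ := lt_of_lt_of_le hcη (le_trans (min_le_right _ _) (min_le_left _ _))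
    have hcε : |c| < ε := lt_of_lt_of_le hcη (min_le_left _ _)
    have hymem : y ∈ Set.Ioo (-r) r := by
      have h2 := abs_lt.mp (lt_of_le_of_lt habs hcr)
      constructor
      · linarith [h2.1]
      · linarith [h2.2]
    have hfy : f y = c := hfe x' hx'mem j hymem
    have hdy : dist y x₀ < δ := by
      rw [Real.dist_eq]; exact lt_of_le_of_lt habs hcδ
    have h3 := hδc hdy
    rw [Real.dist_eq, hfy] at h3
    have h4 : |f x₀| - |c| ≤ |f x₀ - c| := abs_sub_abs_le_abs_sub (f x₀) c
    rw [abs_sub_comm] at h4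
    have : |f x₀| < 2 * ε := by linarith
    rw [hεdef] at this
    linarith
  obtain ⟨x', hx'ne, hx'mem⟩ :=
    (h.and_eventually (Ioo_mem_nhds (by linarith : -(r/2) < (0:ℝ))
      (by linarith : (0:ℝ) < r/2))).exists
  exact hx'ne (key x' hx'mem)
end

section
/- Let λ ∈ (0,1) and let f be a C² function near 0 ∈ ℝ with f(0) = 0, f′(0) = 0, satisfying the invariance equation f(λx + f(x)) = λ·f(x) for all x near 0. Then f ≡ 0 in a neighborhood of 0. -/
/-!
The graph of `f` is invariant under the Jordan block `A (x, y) = (λx + y, λy)`, and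
`A ^ n (x, y) = (λ ^ n (x + n y / λ), λ ^ n y)`. Since `n λ ^ n` is bounded and `f x` is small,
the orbit of `(x, f x)` stays near `0`, hence on the graph:
`f (λ ^ n (x + n f x / λ)) = λ ^ n f x`.
With `|f t| ≤ K t ^ 2` (from `f ∈ C²`, `f 0 = f' 0 = 0`) this gives
`|f x| ≤ K λ ^ n (x + n f x / λ) ^ 2`, which tends to `0`.
-/

open Filter Topology Asymptotics

theorem isBigO_sub_sq_of_deriv_isBigO {E : Type*} [NormedAddCommGroup E] [NormedSpace ℝ E]
    {f : ℝ → E} {x₀ : ℝ} (hdiff : ∀ᶠ x in 𝓝 x₀, DifferentiableAt ℝ f x)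
    (hderiv : deriv f =O[𝓝 x₀] (· - x₀)) :
    (f · - f x₀) =O[𝓝 x₀] fun x ↦ (x - x₀) ^ 2 := by
  obtain ⟨K, hK, hKbound⟩ := hderiv.exists_pos
  obtain ⟨δ, hδ, hball⟩ := Metric.eventually_nhds_iff_ball.1 (hdiff.and hKbound.bound)
  refine IsBigO.of_bound K (Filter.mem_of_superset (Metric.ball_mem_nhds x₀ hδ) fun x hx ↦ ?_)
  have hsub : Metric.closedBall x₀ ‖x - x₀‖ ⊆ Metric.ball x₀ δ :=
    Metric.closedBall_subset_ball (by simpa [dist_eq_norm] using hx)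
  have hmvt := (convex_closedBall x₀ ‖x - x₀‖).norm_image_sub_le_of_norm_deriv_le
    (x := x₀) (y := x)
    (fun t ht ↦ (hball t (hsub ht)).1)
    (fun t ht ↦ (hball t (hsub ht)).2.trans
      (mul_le_mul_of_nonneg_left (by simpa [dist_eq_norm] using ht) hK.le))
    (Metric.mem_closedBall_self (norm_nonneg _)) (by simp [dist_eq_norm])
  simpa [mul_assoc, ← sq] using hmvt

theorem ContDiffAt.isBigO_sub_sq {f : ℝ → ℝ} {x₀ : ℝ} (hf : ContDiffAt ℝ 2 f x₀)
    (hf' : deriv f x₀ = 0) : (f · - f x₀) =O[𝓝 x₀] fun x ↦ (x - x₀) ^ 2 := by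
  refine isBigO_sub_sq_of_deriv_isBigO ((hf.eventually (by simp)).mono
    fun x hx ↦ hx.differentiableAt two_ne_zero) ?_
  have hderiv := (hf.derivWithin (m := 1) le_rfl).differentiableAt one_ne_zero
  simpa [hf'] using hderiv.hasDerivAt.isBigO_sub

/-- First coordinate of `A ^ n (x, y)` for the Jordan block `A (x, y) = (lam * x + y, lam * y)`
(valid for `lam ≠ 0`). -/
noncomputable def jordanOrbit (lam x y : ℝ) (n : ℕ) : ℝ := lam ^ n * (x + n * y / lam)

section jordanOrbit

variable {lam : ℝ} (x y : ℝ)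

@[simp]
theorem jordanOrbit_zero : jordanOrbit lam x y 0 = x := by
  simp [jordanOrbit]

theorem jordanOrbit_succ (hlam : lam ≠ 0) (n : ℕ) :
    jordanOrbit lam x y (n + 1) = lam * jordanOrbit lam x y n + lam ^ n * y := by
  simp only [jordanOrbit]
  push_cast
  field_simp
  ring

theorem apply_jordanOrbit {f : ℝ → ℝ} {s : Set ℝ} (hlam : lam ≠ 0)
    (hfe : ∀ t ∈ s, f (lam * t + f t) = lam * f t)
    (hs : ∀ n, jordanOrbit lam x (f x) n ∈ s) (n : ℕ) :
    f (jordanOrbit lam x (f x) n) = lam ^ n * f x := by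
  induction n with
  | zero => simp
  | succ n ih =>
    rw [jordanOrbit_succ _ _ hlam, ← ih, hfe _ (hs n), ih, pow_succ']
    ring

theorem exists_abs_jordanOrbit_le (hlam0 : 0 < lam) (hlam1 : lam < 1) :
    ∃ C, ∀ x y n, |jordanOrbit lam x y n| ≤ |x| + C * |y| := by
  obtain ⟨C, hC⟩ := (tendsto_self_mul_const_pow_of_lt_one hlam0.le hlam1).bddAbove_range
  have hnC (n : ℕ) : n * lam ^ n ≤ C := hC (Set.mem_range_self n)
  refine ⟨C / lam, fun x y n ↦ ?_⟩
  have hpow : lam ^ n ≤ 1 := pow_le_one₀ hlam0.le hlam1.le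
  calc |jordanOrbit lam x y n|
      ≤ lam ^ n * |x| + n * lam ^ n * |y| / lam := by
        rw [jordanOrbit, mul_add]
        refine (abs_add_le _ _).trans_eq ?_
        rw [abs_mul, abs_of_pos (pow_pos hlam0 n), abs_mul, abs_of_pos (pow_pos hlam0 n),
          abs_div, abs_mul, Nat.abs_cast, abs_of_pos hlam0]
        ring
    _ ≤ |x| + C / lam * |y| := by
        gcongr
        · exact mul_le_of_le_one_left (abs_nonneg x) hpow
        · rw [div_mul_eq_mul_div]
          gcongr
          exact hnC n

theorem tendsto_sq_jordanOrbit_div_pow (hlam0 : 0 < lam) (hlam1 : lam < 1) :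
    Tendsto (fun n ↦ jordanOrbit lam x y n ^ 2 / lam ^ n) atTop (𝓝 0) := by
  have h (k : ℕ) := tendsto_pow_const_mul_const_pow_of_lt_one k hlam0.le hlam1
  have := (((h 0).const_mul (x ^ 2)).add ((h 1).const_mul (2 * x * (y / lam)))).add
    ((h 2).const_mul ((y / lam) ^ 2))
  simp only [mul_zero, add_zero] at this
  refine this.congr fun n ↦ ?_
  have : lam ^ n ≠ 0 := pow_ne_zero n hlam0.ne'
  simp only [jordanOrbit]
  field_simp
  ring

end jordanOrbit

theorem eventually_eq_zero_of_isBigO_sq_of_invariant {lam : ℝ} (hlam0 : 0 < lam) (hlam1 : lam < 1)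
    {f : ℝ → ℝ} (hO : f =O[𝓝 0] fun x ↦ x ^ 2)
    (hfe : ∀ᶠ x in 𝓝 0, f (lam * x + f x) = lam * f x) :
    ∀ᶠ x in 𝓝 0, f x = 0 := by
  obtain ⟨K, hK, hfK⟩ := hO.exists_pos
  obtain ⟨δ, hδ, hball⟩ := Metric.eventually_nhds_iff_ball.1 (hfK.bound.and hfe)
  obtain ⟨C, horbit⟩ := exists_abs_jordanOrbit_le hlam0 hlam1
  have hf : Tendsto f (𝓝 0) (𝓝 0) :=
    hO.trans_tendsto (by simpa using (continuous_pow 2).tendsto (0 : ℝ))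
  have hsmall : Tendsto (fun x ↦ |x| + C * |f x|) (𝓝 0) (𝓝 0) := by
    simpa using (continuous_abs.tendsto 0).add (hf.abs.const_mul C)
  filter_upwards [hsmall.eventually (gt_mem_nhds hδ)] with x hx
  set g := jordanOrbit lam x (f x)
  have hg (n : ℕ) : g n ∈ Metric.ball 0 δ := by
    simpa using (horbit x (f x) n).trans_lt hx
  have hfg (n : ℕ) : f (g n) = lam ^ n * f x :=
    apply_jordanOrbit x hlam0.ne' (fun t ht ↦ (hball t ht).2) hg n
  have hbound (n : ℕ) : |f x| ≤ K * (g n ^ 2 / lam ^ n) := by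
    have := (hball _ (hg n)).1
    rw [hfg, Real.norm_eq_abs, Real.norm_eq_abs, abs_mul, abs_of_pos (pow_pos hlam0 n),
      abs_sq] at this
    rw [← mul_div_assoc, le_div_iff₀ (pow_pos hlam0 n)]
    linarith
  have hlim := (tendsto_sq_jordanOrbit_div_pow x (f x) hlam0 hlam1).const_mul K
  rw [mul_zero] at hlim
  exact abs_nonpos_iff.1 (ge_of_tendsto' hlim hbound)

/-- If `0 < λ < 1` and `f` is `C²` near 0 with `f(0)=0`, `f'(0)=0`,
satisfying `f(λx + f(x)) = λ·f(x)` near 0, then `f ≡ 0` near 0. -/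
theorem jordan_block_invariance_forces_zero
    (lam : ℝ) (hlam0 : 0 < lam) (hlam1 : lam < 1)
    (f : ℝ → ℝ) (hf : ContDiffAt ℝ 2 f 0)
    (hf0 : f 0 = 0) (hf'0 : deriv f 0 = 0)
    (hfe : ∀ᶠ x in 𝓝 (0 : ℝ), f (lam * x + f x) = lam * f x) :
    ∀ᶠ x in 𝓝 (0 : ℝ), f x = 0 := by
  have hO : f =O[𝓝 0] fun x ↦ x ^ 2 := by simpa [hf0] using hf.isBigO_sub_sq hf'0
  exact eventually_eq_zero_of_isBigO_sq_of_invariant hlam0 hlam1 hO hfe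
end

section
/- Let H_δ = {z ∈ ℂ : Re z > 1/(2kδ)} and let φ : H_δ → H_δ be holomorphic of the form φ(z) = z + 1 + b/z + R(z) with |R(z)| ≤ C₀/|z|² on H_δ, and suppose Re φ^{∘j}(z) > Re z + j/2 for all z ∈ H_δ and j ∈ ℕ. Assume moreover |dφ/dz(z) − 1| = |T(z)| ≤ C₁/|z|² for a constant C₁. Then for every ε > 0 there exists n₁ ∈ ℕ such that for every z₁ ∈ H_δ with Re z₁ ≥ n₁/2 and every j ∈ ℕ, |d(φ^{∘j})/dz (z₁) − 1| < ε. -/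
/-!
By the chain rule `(φ^[j])' z₁ = ∏_{i<j} φ'(φ^[i] z₁)`, and a product of factors `1 + tᵢ` lies
within `exp (∑ ‖tᵢ‖) - 1` of `1`. Since the orbit escapes linearly, `‖φ^[i] z₁‖ ≥ (n₁ + i) / 2`,
the bound on `T` gives `∑ ‖tᵢ‖ ≤ 4 C₁ ∑ 1 / (n₁ + i)² ≤ 4 C₁ / (n₁ - 1)`, which is small for large
`n₁`, uniformly in `j`.
-/

open Filter Topology Finset

theorem hasDerivAt_iterate_of_orbit {𝕜 : Type*} [NontriviallyNormedField 𝕜] {f f' : 𝕜 → 𝕜}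
    {x : 𝕜} {n : ℕ} (hf : ∀ i < n, HasDerivAt f (f' (f^[i] x)) (f^[i] x)) :
    HasDerivAt f^[n] (∏ i ∈ range n, f' (f^[i] x)) x := by
  induction n with
  | zero => simpa using hasDerivAt_id x
  | succ n ih =>
    rw [Function.iterate_succ', prod_range_succ, mul_comm]
    exact (hf n n.lt_succ_self).comp x (ih fun i hi => hf i (hi.trans n.lt_succ_self))

-- Bounding each term by `1 / (a + i - 1) - 1 / (a + i)` makes the sum telescope.
theorem sum_range_one_div_add_sq_le {a : ℝ} (ha : 1 < a) (n : ℕ) :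
    ∑ i ∈ range n, 1 / (a + i) ^ 2 ≤ 1 / (a - 1) := by
  have hpos : ∀ i : ℕ, 0 < a + i - 1 := fun i => by linarith [(i.cast_nonneg : (0 : ℝ) ≤ i)]
  calc ∑ i ∈ range n, 1 / (a + i) ^ 2
      ≤ ∑ i ∈ range n, (1 / (a + i - 1) - 1 / (a + (i + 1 : ℕ) - 1)) := by
        gcongr with i
        have h := hpos i
        rw [Nat.cast_succ, div_sub_div _ _ h.ne' (by linarith), div_le_div_iff₀ (by positivity)
          (by nlinarith)]
        nlinarith
    _ = 1 / (a - 1) - 1 / (a + n - 1) := by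
        rw [sum_range_sub']
        simp
    _ ≤ 1 / (a - 1) := sub_le_self _ (one_div_pos.2 (hpos n)).le

theorem sum_range_div_sq_le_of_linear_growth {C a : ℝ} (hC : 0 ≤ C) (ha : 1 < a) {r : ℕ → ℝ}
    (hr : ∀ i : ℕ, (a + i) / 2 ≤ r i) (n : ℕ) :
    ∑ i ∈ range n, C / r i ^ 2 ≤ 4 * C / (a - 1) := by
  calc ∑ i ∈ range n, C / r i ^ 2 ≤ ∑ i ∈ range n, C / ((a + i) / 2) ^ 2 := by
        gcongr with i
        exact hr i
    _ = 4 * C * ∑ i ∈ range n, 1 / (a + i) ^ 2 := by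
        rw [mul_sum]
        refine sum_congr rfl fun i _ => ?_
        field_simp
        ring
    _ ≤ 4 * C * (1 / (a - 1)) := by gcongr; exact sum_range_one_div_add_sq_le ha n
    _ = 4 * C / (a - 1) := by ring

theorem eventually_exp_div_sub_one_lt (c : ℝ) {ε : ℝ} (hε : 0 < ε) :
    ∀ᶠ n : ℕ in atTop, Real.exp (c / ((n : ℝ) - 1)) - 1 < ε := by
  have hdiv : Tendsto (fun n : ℕ => c / ((n : ℝ) - 1)) atTop (𝓝 0) :=
    tendsto_const_nhds.div_atTop (tendsto_atTop_add_const_right _ (-1) tendsto_natCast_atTop_atTop)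
  have hexp := ((Real.continuous_exp.tendsto 0).comp hdiv).sub_const 1
  rw [Function.comp_def, Real.exp_zero, sub_self] at hexp
  exact hexp.eventually (gt_mem_nhds hε)

theorem iterates_derivative_close_to_one_general
    (k : ℕ) (δ : ℝ)
    (H : Set ℂ) (hH : H = {z : ℂ | 1 / (2 * k * δ) < z.re})
    (φ : ℂ → ℂ) (C₁ : ℝ)
    (hmaps : Set.MapsTo φ H H)
    (hhol : DifferentiableOn ℂ φ H)
    (hre : ∀ z ∈ H, ∀ j : ℕ, 1 ≤ j → z.re + (j : ℝ) / 2 < ((φ^[j]) z).re)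
    (hT : ∀ z ∈ H, ‖deriv φ z - 1‖ ≤ C₁ / ‖z‖ ^ 2) :
    ∀ ε > (0 : ℝ), ∃ n₁ : ℕ, ∀ z₁ ∈ H, (n₁ : ℝ) / 2 ≤ z₁.re →
      ∀ j : ℕ, ‖deriv (φ^[j]) z₁ - 1‖ < ε := by
  have hopen : IsOpen H := hH ▸ isOpen_lt continuous_const Complex.continuous_re
  intro ε hε
  obtain ⟨n₁, hn₁, hn₁ε⟩ :=
    ((eventually_gt_atTop 1).and (eventually_exp_div_sub_one_lt (4 * C₁) hε)).exists
  refine ⟨n₁, fun z₁ hz₁ hz₁re j => ?_⟩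
  have horbit (i : ℕ) : φ^[i] z₁ ∈ H := hmaps.iterate i hz₁
  have hescape (i : ℕ) : ((n₁ : ℝ) + i) / 2 ≤ ‖φ^[i] z₁‖ := by
    refine le_trans ?_ (Complex.re_le_norm _)
    rcases i.eq_zero_or_pos with rfl | hi
    · simpa using hz₁re
    · linarith [hre z₁ hz₁ i hi]
  have hC₁ : 0 ≤ C₁ := by
    have hz₁pos : 0 < ‖z₁‖ ^ 2 := by
      have : (1 : ℝ) < n₁ := by exact_mod_cast hn₁
      exact pow_pos (by linarith [Complex.re_le_norm z₁]) 2
    simpa using (le_div_iff₀ hz₁pos).1 ((norm_nonneg _).trans (hT z₁ hz₁))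
  have hderiv : deriv (φ^[j]) z₁ = ∏ i ∈ range j, (1 + (deriv φ (φ^[i] z₁) - 1)) := by
    simp only [add_sub_cancel]
    exact (hasDerivAt_iterate_of_orbit fun i _ =>
      ((hhol _ (horbit i)).differentiableAt (hopen.mem_nhds (horbit i))).hasDerivAt).deriv
  have hsum : ∑ i ∈ range j, ‖deriv φ (φ^[i] z₁) - 1‖ ≤ 4 * C₁ / (n₁ - 1) :=
    (sum_le_sum fun i _ => hT _ (horbit i)).trans
      (sum_range_div_sq_le_of_linear_growth hC₁ (by exact_mod_cast hn₁) hescape j)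
  calc ‖deriv (φ^[j]) z₁ - 1‖ ≤ Real.exp (∑ i ∈ range j, ‖deriv φ (φ^[i] z₁) - 1‖) - 1 :=
        hderiv ▸ norm_prod_one_add_sub_one_le _ _
    _ ≤ Real.exp (4 * C₁ / (n₁ - 1)) - 1 := by gcongr
    _ < ε := hn₁ε

/-- derivative estimate for the iterates of an almost-translation
`φ(z) = z + 1 + b/z + R(z)` on a half-plane `H_δ`. -/
theorem iterates_derivative_close_to_one
    (k : ℕ) (hk : 1 ≤ k) (δ : ℝ) (hδ : 0 < δ)
    (H : Set ℂ) (hH : H = {z : ℂ | 1 / (2 * k * δ) < z.re})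
    (φ R : ℂ → ℂ) (b : ℂ) (C₀ C₁ : ℝ)
    (hmaps : Set.MapsTo φ H H)
    (hhol : DifferentiableOn ℂ φ H)
    (hform : ∀ z ∈ H, φ z = z + 1 + b / z + R z)
    (hR : ∀ z ∈ H, ‖R z‖ ≤ C₀ / ‖z‖ ^ 2)
    (hre : ∀ z ∈ H, ∀ j : ℕ, 1 ≤ j → z.re + (j : ℝ) / 2 < ((φ^[j]) z).re)
    (hT : ∀ z ∈ H, ‖deriv φ z - 1‖ ≤ C₁ / ‖z‖ ^ 2) :
    ∀ ε > (0 : ℝ), ∃ n₁ : ℕ, ∀ z₁ ∈ H, (n₁ : ℝ) / 2 ≤ z₁.re →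
      ∀ j : ℕ, ‖deriv (φ^[j]) z₁ - 1‖ < ε :=
  iterates_derivative_close_to_one_general k δ H hH φ C₁ hmaps hhol hre hT
end

section
/- Let φ : H → H be a map on a subset H ⊂ ℂ satisfying φ(z) = z + 1 + E(z) where |E(z)| ≤ C/|z| for some constant C, and suppose |φ^{∘n}(z)| ≥ n/2 for all n ≥ 1. Fix z ∈ H and set r_n = φ^{∘n}(z). Then arg r_n → 0 as n → ∞. -/
open Filter Topology

/-! Telescoping `r_{n+1} - r_n = 1 + E(r_n)` gives `r_n = z + n + ∑_{k<n} E(r_k)`. Since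
`|r_n| → ∞`, the errors `E(r_n)` tend to `0`, so by Cesàro `r_n / n → 1`; as `arg` is continuous
at `1` and invariant under positive scaling, `arg r_n → arg 1 = 0`. -/

theorem Filter.Tendsto.inv_smul_of_tendsto_sub {E : Type*} [NormedAddCommGroup E]
    [NormedSpace ℝ E] {u : ℕ → E} {a : E}
    (h : Tendsto (fun n => u (n + 1) - u n) atTop (𝓝 a)) :
    Tendsto (fun n : ℕ => (n : ℝ)⁻¹ • u n) atTop (𝓝 a) := by
  have hsplit : (fun n : ℕ => (n : ℝ)⁻¹ • u n) = fun n : ℕ =>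
      (n : ℝ)⁻¹ • u 0 + (n : ℝ)⁻¹ • ∑ k ∈ Finset.range n, (u (k + 1) - u k) := by
    ext n
    rw [Finset.sum_range_sub, ← smul_add, add_sub_cancel]
  have hinit : Tendsto (fun n : ℕ => (n : ℝ)⁻¹ • u 0) atTop (𝓝 0) := by
    simpa using (tendsto_inv_atTop_nhds_zero_nat (𝕜 := ℝ)).smul_const (u 0)
  simpa [hsplit] using hinit.add h.cesaro_smul

theorem Complex.tendsto_arg_of_tendsto_smul {ι : Type*} {l : Filter ι} {c : ι → ℝ} {r : ι → ℂ}
    {a : ℂ} (hc : ∀ᶠ i in l, 0 < c i) (h : Tendsto (fun i => c i • r i) l (𝓝 a))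
    (ha : a ∈ slitPlane) :
    Tendsto (fun i => arg (r i)) l (𝓝 (arg a)) := by
  refine ((continuousAt_arg ha).tendsto.comp h).congr' ?_
  filter_upwards [hc] with i hi
  simp [Complex.real_smul, arg_real_mul _ hi]

/-- For `φ(z) = z + 1 + E(z)` with `|E(z)| ≤ C/|z|` mapping `H` to
itself and `|φ^[n](z)| ≥ n/2`, the arguments of the orbit `r_n = φ^[n](z)` tend to 0. -/
theorem orbit_argument_tendsto_zero
    (H : Set ℂ) (φ : ℂ → ℂ) (C : ℝ)
    (hmaps : Set.MapsTo φ H H)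
    (hE : ∀ w ∈ H, ‖φ w - w - 1‖ ≤ C / ‖w‖)
    (hiter : ∀ w ∈ H, ∀ n : ℕ, 1 ≤ n → (n : ℝ) / 2 ≤ ‖(φ^[n]) w‖)
    (z : ℂ) (hz : z ∈ H) :
    Tendsto (fun n : ℕ => Complex.arg ((φ^[n]) z)) atTop (𝓝 0) := by
  set r : ℕ → ℂ := fun n => (φ^[n]) z
  have hnorm : Tendsto (fun n => ‖r n‖) atTop atTop :=
    tendsto_atTop_mono' _ ((eventually_ge_atTop 1).mono fun n hn => hiter z hz n hn)
      (tendsto_natCast_atTop_atTop.atTop_div_const two_pos)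
  have hstep : Tendsto (fun n => r (n + 1) - r n) atTop (𝓝 1) := by
    have herr : Tendsto (fun n => r (n + 1) - r n - 1) atTop (𝓝 0) := by
      refine squeeze_zero_norm (fun n => ?_) ((tendsto_const_nhds (x := C)).div_atTop hnorm)
      simpa only [r, Function.iterate_succ_apply'] using hE _ (hmaps.iterate n hz)
    simpa using herr.add_const 1
  have hpos : ∀ᶠ n : ℕ in atTop, (0 : ℝ) < (n : ℝ)⁻¹ :=
    (eventually_gt_atTop 0).mono fun n hn => by positivity
  simpa using Complex.tendsto_arg_of_tendsto_smul hpos hstep.inv_smul_of_tendsto_sub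
    Complex.one_mem_slitPlane
end
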